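/- arXiv:math/9806070 — 4 statements merged into one kernel-verified Lean document; each statement's English description precedes it below -/
import Mathlib

section
/- Let L be a field of characteristic p > 0 with a valuation w : L* → G into a linearly ordered abelian group G (written additively). Let f(x) = a_0 x^{n_0} + a_1 x^{n_1} + ... + a_k x^{n_k} ∈ L[x] be a polynomial with exactly k+1 nonzero coefficients a_i ∈ L* (with distinct exponents n_0 < ... < n_k). Suppose r ∈ L* is not a zero of f. Then the set of values { w(α − r) : α ∈ L, f(α) = 0, w(α − r) > w(r) } has at most k elements. (In other words, the zeros of f lying in the open disk of center r and radius w(r) realize at most k distinct distances from r.) -/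
/-!
Suppose zeros `α₀, …, α_k` realize `k + 1` distinct distances `w (α_j - r) < w r` and put
`u_j = (α_j - r) / r`, so that `0 < w u_j < 1` are pairwise distinct and
`∑ l, a_l r ^ n_l (1 + u_j) ^ n_l = 0`: the matrix `((1 + u_j) ^ n_l)` is singular.
The polynomials `(1 + X) ^ n_l` are linearly independent over `𝔽_p`, so `𝔽_p`-linear row
operations turn them into `g_0, …, g_k` of strictly increasing orders `d_i` at `0`. Nonzero elements
of `𝔽_p` have valuation `1` (this is where the characteristic enters), hence
`w (g_i u_j) = (w u_j) ^ d_i`, and by the rearrangement inequality the diagonal term of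
`det (g_i u_j)` strictly dominates all the others, so this determinant cannot vanish.
-/

open Polynomial Module Equiv Finset

theorem Set.exists_strictMono_fin_of_le_encard {α : Type*} [LinearOrder α] {s : Set α} {m : ℕ}
    (hm : m ≤ s.encard) : ∃ f : Fin m → α, StrictMono f ∧ ∀ i, f i ∈ s := by
  obtain ⟨t, hts, ht⟩ := s.exists_subset_encard_eq hm
  have htf : t.Finite := Set.finite_of_encard_eq_coe ht
  have hcard : htf.toFinset.card = m := by
    rw [← Set.ncard_eq_toFinset_card t htf, Set.ncard_def, ht, ENat.toNat_natCast]
  exact ⟨_, (htf.toFinset.orderEmbOfFin hcard).strictMono,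
    fun i => hts (htf.mem_toFinset.1 (orderEmbOfFin_mem _ hcard i))⟩

section TrailingDegree

variable {K : Type*} [Field K]

theorem linearIndependent_one_add_X_pow {ι : Type*} {n : ι → ℕ} (hn : Function.Injective n) :
    LinearIndependent K fun l => (1 + X : K[X]) ^ n l := by
  have hX : LinearIndependent K fun l => (X : K[X]) ^ n l := by
    simpa [Function.comp_def, ← X_pow_eq_monomial] using
      (basisMonomials K).linearIndependent.comp n hn
  simpa [Function.comp_def, add_comm] using
    hX.map' (taylor 1) (LinearMap.ker_eq_bot.2 (taylor_injective 1))

theorem Submodule.finrank_le_card_of_natTrailingDegree_mem (V : Submodule K K[X]) (D : Finset ℕ)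
    (hD : ∀ g ∈ V, g ≠ 0 → g.natTrailingDegree ∈ D) : finrank K V ≤ D.card := by
  let Φ : V →ₗ[K] D → K := LinearMap.pi fun t => (lcoeff K t).comp V.subtype
  have hΦ : Function.Injective Φ := by
    rw [← LinearMap.ker_eq_bot, LinearMap.ker_eq_bot']
    by_contra! ⟨g, hΦg, hg⟩
    have hg' : (g : K[X]) ≠ 0 := by simpa using hg
    exact trailingCoeff_nonzero_iff_nonzero.2 hg' (congrFun hΦg ⟨_, hD g g.2 hg'⟩)
  calc finrank K V ≤ finrank K (D → K) := LinearMap.finrank_le_finrank_of_injective hΦ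
    _ = D.card := by simp

theorem Submodule.exists_strictMono_natTrailingDegree (V : Submodule K K[X]) {m : ℕ}
    (hm : m ≤ finrank K V) :
    ∃ g : Fin m → K[X], (∀ i, g i ∈ V ∧ g i ≠ 0) ∧ StrictMono fun i => (g i).natTrailingDegree := by
  set D := {t | ∃ g ∈ V, g ≠ 0 ∧ g.natTrailingDegree = t}
  have hD : (m : ℕ∞) ≤ D.encard := by
    rcases D.finite_or_infinite with hD | hD
    · rw [← hD.cast_ncard_eq, Set.ncard_eq_toFinset_card D hD, Nat.cast_le]
      exact hm.trans <| V.finrank_le_card_of_natTrailingDegree_mem hD.toFinset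
        fun g hg hg0 => hD.mem_toFinset.2 ⟨g, hg, hg0, rfl⟩
    · simp [hD.encard_eq]
  obtain ⟨t, ht, htD⟩ := D.exists_strictMono_fin_of_le_encard hD
  choose g hgV hg0 hgt using htD
  exact ⟨g, fun i => ⟨hgV i, hg0 i⟩, by simpa only [hgt] using ht⟩

end TrailingDegree

section Valuation

variable {L Γ₀ : Type*} [Field L] [LinearOrderedCommGroupWithZero Γ₀] (w : Valuation L Γ₀)

theorem Valuation.map_eval₂_eq_pow_natTrailingDegree {R : Type*} [Semiring R] (φ : R →+* L)
    {g : R[X]} (hφ : ∀ t, w (φ (g.coeff t)) ≤ 1) (hg : w (φ g.trailingCoeff) = 1)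
    {u : L} (hu0 : u ≠ 0) (hu1 : w u < 1) :
    w (g.eval₂ φ u) = w u ^ g.natTrailingDegree := by
  classical
  have hlead : w (φ (g.coeff g.natTrailingDegree) * u ^ g.natTrailingDegree) =
      w u ^ g.natTrailingDegree := by
    rw [map_mul, ← trailingCoeff, hg, one_mul, map_pow]
  have hg0 : g ≠ 0 := by
    rintro rfl; simp at hg
  rw [eval₂_eq_sum, sum_def, w.map_sum_eq_of_lt (natTrailingDegree_mem_support_of_nonzero hg0),
    hlead]
  intro t ht
  obtain ⟨htg, htd⟩ : t ∈ g.support ∧ t ≠ g.natTrailingDegree := by simpa using ht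
  have hlt : g.natTrailingDegree < t := (natTrailingDegree_le_of_mem_supp t htg).lt_of_ne' htd
  calc w (φ (g.coeff t) * u ^ t) ≤ w u ^ t := by
        rw [map_mul, map_pow]; exact mul_le_of_le_one_left' (hφ t)
    _ < w u ^ g.natTrailingDegree := pow_lt_pow_right_of_lt_one₀ (w.pos_iff.2 hu0) hu1 hlt
    _ = _ := hlead.symm

theorem Valuation.map_aeval_eq_pow_natTrailingDegree {F : Type*} [Field F] [Finite F]
    [Algebra F L] {g : F[X]} (hg : g ≠ 0) {u : L} (hu0 : u ≠ 0) (hu1 : w u < 1) :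
    w (aeval u g) = w u ^ g.natTrailingDegree :=
  w.map_eval₂_eq_pow_natTrailingDegree _ (fun _ => FiniteField.valuation_algebraMap_le_one w _)
    (FiniteField.valuation_algebraMap_eq_one w _ (trailingCoeff_nonzero_iff_nonzero.2 hg)) hu0 hu1

end Valuation

theorem Equiv.Perm.exists_lt_of_ne_one {ι : Type*} [LinearOrder ι] [Finite ι] {σ : Perm ι}
    (hσ : σ ≠ 1) : ∃ i j, i < j ∧ σ j < σ i := by
  by_contra! h
  exact hσ <| Equiv.ext <| congrFun (StrictMono.eq_id fun i j hij =>
    (h i j hij).lt_of_ne (σ.injective.ne hij.ne))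

theorem prod_pow_comp_perm_lt_prod_pow {ι G : Type*} [LinearOrder ι] [Fintype ι] [CommGroup G]
    [LinearOrder G] [IsOrderedMonoid G] {ε : ι → G} {d : ι → ℕ} (hε : StrictMono ε)
    (hd : StrictMono d) {σ : Perm ι} (hσ : σ ≠ 1) :
    ∏ i, ε (σ i) ^ d i < ∏ i, ε i ^ d i := by
  let g : ι → Additive G := fun i => Additive.ofMul (ε i)
  have hdg : Monovary d g := fun i j hij => (hd.le_iff_le).2 (hε.lt_iff_lt.1 hij).le
  have key : ∑ i, d i • g (σ i) < ∑ i, d i • g i := by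
    rw [hdg.sum_smul_comp_perm_lt_sum_smul_iff]
    obtain ⟨i, j, hij, hσij⟩ := σ.exists_lt_of_ne_one hσ
    exact fun h => (hd hij).not_ge (h (hε hσij))
  simpa [g, ← ofMul_pow, ← ofMul_prod] using key

section Determinant

variable {R Γ₀ : Type*} [CommRing R] [LinearOrderedCommGroupWithZero Γ₀] (w : Valuation R Γ₀)

theorem Matrix.det_ne_zero_of_valuation_prod_diag_gt {n : Type*} [Fintype n] [DecidableEq n]
    (B : Matrix n n R) (hdiag : w (∏ i, B i i) ≠ 0)
    (hlt : ∀ σ : Perm n, σ ≠ 1 → w (∏ i, B (σ i) i) < w (∏ i, B i i)) :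
    B.det ≠ 0 := by
  have hsign (σ : Perm n) (x : R) : w (Perm.sign σ • x) = w x := by
    rcases Int.units_eq_one_or (Perm.sign σ) with h | h <;> simp [h]
  have hdet : w B.det = w (∏ i, B i i) := by
    rw [det_apply, w.map_sum_eq_of_lt (mem_univ 1)]
    · simp
    · intro σ hσ
      rw [hsign, hsign]
      exact hlt σ (by simpa using hσ)
  exact fun h => hdiag (by rw [← hdet, h, map_zero])

theorem Matrix.det_ne_zero_of_valuation_eq_pow {ι : Type*} [Fintype ι] [LinearOrder ι]
    (B : Matrix ι ι R) {ε : ι → Γ₀} {d : ι → ℕ} (hε0 : ∀ j, ε j ≠ 0) (hε : StrictMono ε)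
    (hd : StrictMono d) (hB : ∀ j i, w (B j i) = ε j ^ d i) : B.det ≠ 0 := by
  let e : ι → Γ₀ˣ := fun j => Units.mk0 (ε j) (hε0 j)
  have he : StrictMono e := fun i j hij => Units.val_lt_val.1 (hε hij)
  have hprod (σ : Perm ι) : w (∏ i, B (σ i) i) = ↑(∏ i, e (σ i) ^ d i) := by
    simp [e, hB]
  have hdiag := hprod 1
  simp only [Perm.one_apply] at hdiag
  refine B.det_ne_zero_of_valuation_prod_diag_gt w (by rw [hdiag]; exact Units.ne_zero _)
    fun σ hσ => ?_
  rw [hprod, hdiag]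
  exact Units.val_lt_val.2 (prod_pow_comp_perm_lt_prod_pow he hd hσ)

end Determinant

theorem det_aeval_ne_zero_of_linearIndependent {L Γ₀ F : Type*} [Field L]
    [LinearOrderedCommGroupWithZero Γ₀]
    (w : Valuation L Γ₀) [Field F] [Finite F] [Algebra F L] {m : ℕ} {q : Fin m → F[X]}
    (hq : LinearIndependent F q) {u : Fin m → L} (hu0 : ∀ j, u j ≠ 0) (hu1 : ∀ j, w (u j) < 1)
    (hu : StrictMono fun j => w (u j)) :
    (Matrix.of fun j l => aeval (u j) (q l)).det ≠ 0 := by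
  obtain ⟨g, hg, hd⟩ := (Submodule.span F (Set.range q)).exists_strictMono_natTrailingDegree
    (by rw [finrank_span_eq_card hq, Fintype.card_fin])
  choose C hC using fun i => (Submodule.mem_span_range_iff_exists_fun F).1 (hg i).1
  have hB : Matrix.of (fun j i => aeval (u j) (g i)) =
      Matrix.of (fun j l => aeval (u j) (q l)) *
        ((Matrix.of C).map (algebraMap F L)).transpose := by
    ext j i
    simp [← hC, Matrix.mul_apply, Algebra.smul_def, mul_comm]
  have hBdet := Matrix.det_ne_zero_of_valuation_eq_pow w
    (Matrix.of fun j i => aeval (u j) (g i)) (fun j => w.ne_zero_iff.2 (hu0 j)) hu hd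
    fun j i => w.map_aeval_eq_pow_natTrailingDegree (hg i).2 (hu0 j) (hu1 j)
  rw [hB, Matrix.det_mul] at hBdet
  exact left_ne_zero_of_mul hBdet

theorem zeros_in_disk_realize_at_most_k_distances
    {L : Type*} [Field L] {p : ℕ} [hp : Fact p.Prime] [CharP L p]
    {Γ₀ : Type*} [LinearOrderedCommGroupWithZero Γ₀] (w : Valuation L Γ₀)
    {k : ℕ} (a : Fin (k + 1) → L) (ha : ∀ i, a i ≠ 0)
    (n : Fin (k + 1) → ℕ) (hn : StrictMono n)
    (f : Polynomial L)
    (hf : f = ∑ i, Polynomial.C (a i) * Polynomial.X ^ (n i))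
    (r : L) (hr : r ≠ 0) (hfr : Polynomial.eval r f ≠ 0) :
    {γ : Γ₀ | ∃ α : L, Polynomial.eval α f = 0 ∧ w (α - r) < w r ∧
        γ = w (α - r)}.ncard ≤ k := by
  set S := {γ : Γ₀ | ∃ α : L, Polynomial.eval α f = 0 ∧ w (α - r) < w r ∧ γ = w (α - r)}
  by_contra! hk
  obtain ⟨γ, hγ, hγS⟩ := S.exists_strictMono_fin_of_le_encard (m := k + 1)
    ((Nat.cast_le.2 hk).trans S.ncard_le_encard)
  choose α hαf hαr hγα using hγS
  let u j := (α j - r) / r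
  have hwr : 0 < w r := w.pos_iff.2 hr
  have hwu (j) : w (u j) = γ j / w r := by simp [u, hγα]
  let _ : Algebra (ZMod p) L := ZMod.algebra L p
  refine det_aeval_ne_zero_of_linearIndependent w
    (linearIndependent_one_add_X_pow (K := ZMod p) hn.injective) (u := u)
    (fun j => div_ne_zero (sub_ne_zero.2 fun h => hfr (h ▸ hαf j)) hr)
    (fun j => by rw [hwu, div_lt_one₀ hwr, hγα]; exact hαr j)
    (fun i j hij => by simpa only [hwu] using div_lt_div_of_pos_right (hγ hij) hwr) ?_
  rw [← Matrix.exists_mulVec_eq_zero_iff]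
  refine ⟨fun l => a l * r ^ n l, fun h => mul_ne_zero (ha 0) (pow_ne_zero _ hr) (congrFun h 0), ?_⟩
  ext j
  have hα : (1 + u j) * r = α j := by rw [add_mul, div_mul_cancel₀ _ hr]; ring
  have hterm (l) :
      aeval (u j) ((1 + X : (ZMod p)[X]) ^ n l) * (a l * r ^ n l) = a l * α j ^ n l := by
    rw [← hα, map_pow, map_add, map_one, aeval_X, mul_pow]; ring
  simp only [Matrix.mulVec, dotProduct, Matrix.of_apply, hterm, Pi.zero_apply]
  simpa [hf, eval_finsetSum] using hαf j
end

section
/- Let f(x) = a_0 x^{n_0} + a_1 x^{n_1} + ... + a_k x^{n_k} ∈ K[x] be a polynomial with exactly k+1 nonzero coefficients a_i ∈ K* (distinct exponents n_0 < ... < n_k), and assume k ≥ 1. Then for every g ∈ G, the number of distinct zeros α of f in K with v(α) = g is at most (q − 1)·q^{k−1}. -/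
/-!
Fix a root `x` of `f` with `v x = g` and expand `f (x + d) = ∑ⱼ cⱼ dʲ`. For every other root
`y = x + d` the maximum of `v cⱼ * v(d)ʲ` is attained twice, so `v (x - y)` is a corner of the
upper envelope of the functions `η ↦ v cⱼ * ηʲ`; below `g` there are fewer corners than distinct
values `v (cⱼ xʲ)`. As `f x = 0`, every `cⱼ xʲ = ∑ᵢ (nᵢ choose j) aᵢ x^nᵢ` is an integer
combination of the `k` elements `aᵢ x^nᵢ` with `i ≥ 1`, and in characteristic `p` elements with
distinct valuations are linearly independent over `𝔽_p`. Hence each root sees at most `k - 1`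
distances `< g` to other roots. Splitting the roots on the sphere `v = g` into residue classes
(`q - 1` nonzero classes at the top, at most `q` at every further level, where each point loses
one distance) gives `(q - 1) q^(k-1)`.
-/

open Polynomial

section UpperEnvelope

variable {Γ₀ : Type*} [LinearOrderedCommGroupWithZero Γ₀] {J : Finset ℕ} {ε : ℕ → Γ₀} {η : Γ₀}

theorem le_mul_pow_sub_of_isMaxOn {i j : ℕ} (hη : η ≠ 0) (hi : i ∈ J) (hij : i ≤ j)
    (hj : IsMaxOn (fun l => ε l * η ^ l) J j) : ε i ≤ ε j * η ^ (j - i) := by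
  have h : ε i * η ^ i ≤ ε j * η ^ (j - i) * η ^ i := by
    rw [mul_assoc, ← pow_add, Nat.sub_add_cancel hij]
    exact hj hi
  exact (mul_le_mul_iff_left₀ (zero_lt_iff.2 (pow_ne_zero i hη))).1 h

theorem mul_pow_sub_le_of_isMaxOn {i j : ℕ} (hη : η ≠ 0) (hi : i ∈ J) (hji : j ≤ i)
    (hj : IsMaxOn (fun l => ε l * η ^ l) J j) : ε i * η ^ (i - j) ≤ ε j := by
  have h : ε i * η ^ (i - j) * η ^ j ≤ ε j * η ^ j := by
    rw [mul_assoc, ← pow_add, Nat.sub_add_cancel hji]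
    exact hj hi
  exact (mul_le_mul_iff_left₀ (zero_lt_iff.2 (pow_ne_zero j hη))).1 h

theorem mul_pow_lt_of_isMaxOn_of_lt {ρ : Γ₀} (hη : η ≠ 0) (hηρ : η < ρ) {i j : ℕ} (hi : i ∈ J)
    (hij : i < j) (hj : IsMaxOn (fun l => ε l * η ^ l) J j) (hεj : ε j ≠ 0) :
    ε i * ρ ^ i < ε j * ρ ^ j := by
  have hρ : ρ ^ i ≠ 0 := pow_ne_zero i (zero_lt_iff.1 ((zero_le).trans_lt hηρ))
  calc ε i * ρ ^ i ≤ ε j * η ^ (j - i) * ρ ^ i := by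
        gcongr
        exact le_mul_pow_sub_of_isMaxOn hη hi hij.le hj
    _ < ε j * ρ ^ (j - i) * ρ ^ i :=
        mul_lt_mul_of_pos_right (mul_lt_mul_of_pos_left
          (pow_lt_pow_left₀ hηρ zero_le (Nat.sub_ne_zero_of_lt hij)) (zero_lt_iff.2 hεj))
          (zero_lt_iff.2 hρ)
    _ = ε j * ρ ^ j := by rw [mul_assoc, ← pow_add, Nat.sub_add_cancel hij.le]

theorem le_of_isMaxOn_of_lt {η' : Γ₀} (hη : η ≠ 0) (hηη' : η < η') {i j : ℕ} (hi : i ∈ J)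
    (hj : j ∈ J) (hiη : IsMaxOn (fun l => ε l * η ^ l) J i)
    (hjη' : IsMaxOn (fun l => ε l * η' ^ l) J j) (hεi : ε i ≠ 0) : i ≤ j := by
  by_contra! hji
  have h₁ := le_mul_pow_sub_of_isMaxOn hη hj hji.le hiη
  have h₂ := mul_pow_sub_le_of_isMaxOn ((zero_le).trans_lt hηη').ne' hi hji.le hjη'
  have : ε i * η ^ (i - j) < ε i * η' ^ (i - j) :=
    mul_lt_mul_of_pos_left (pow_lt_pow_left₀ hηη' zero_le (Nat.sub_ne_zero_of_lt hji))
      (zero_lt_iff.2 hεi)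
  exact (h₂.trans h₁).not_gt this

theorem card_le_card_image_sub_one (hε : ∀ j ∈ J, ε j ≠ 0) {ρ : Γ₀} (D : Finset Γ₀)
    (hD : ∀ η ∈ D, η ≠ 0 ∧ η < ρ ∧ ∃ i ∈ J, ∃ j ∈ J, i ≠ j ∧
      IsMaxOn (fun l => ε l * η ^ l) J i ∧ IsMaxOn (fun l => ε l * η ^ l) J j) :
    D.card ≤ (J.image fun j => ε j * ρ ^ j).card - 1 := by
  rcases D.eq_empty_or_nonempty with rfl | hDne
  · simp
  have hD' : ∀ η ∈ D, η ≠ 0 ∧ η < ρ ∧ ∃ i ∈ J, ∃ j ∈ J, i < j ∧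
      IsMaxOn (fun l => ε l * η ^ l) J i ∧ IsMaxOn (fun l => ε l * η ^ l) J j := by
    intro η hη
    obtain ⟨hη0, hηρ, i, hi, j, hj, hij, hmi, hmj⟩ := hD η hη
    refine ⟨hη0, hηρ, ?_⟩
    rcases hij.lt_or_gt with hij | hji
    · exact ⟨i, hi, j, hj, hij, hmi, hmj⟩
    · exact ⟨j, hj, i, hi, hji, hmj, hmi⟩
  choose! hη0 hηρ i hi j hj hij hmi hmj using hD'
  -- Convexity of the envelope: the larger maximizer `j η` moves right as `η` grows.
  have hmono : StrictMonoOn (fun η => ε (j η) * ρ ^ j η) D := fun η₁ h₁ η₂ h₂ h₁₂ =>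
    mul_pow_lt_of_isMaxOn_of_lt (hη0 η₂ h₂) (hηρ η₂ h₂) (hj η₁ h₁)
      ((le_of_isMaxOn_of_lt (hη0 η₁ h₁) h₁₂ (hj η₁ h₁) (hi η₂ h₂) (hmj η₁ h₁) (hmi η₂ h₂)
        (hε _ (hj η₁ h₁))).trans_lt (hij η₂ h₂)) (hmj η₂ h₂) (hε _ (hj η₂ h₂))
  set η₀ := D.min' hDne
  have hη₀ : η₀ ∈ D := D.min'_mem hDne
  have hbelow : ∀ η ∈ D, ε (i η₀) * ρ ^ i η₀ < ε (j η) * ρ ^ j η := fun η hη =>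
    (mul_pow_lt_of_isMaxOn_of_lt (hη0 η₀ hη₀) (hηρ η₀ hη₀) (hi η₀ hη₀) (hij η₀ hη₀) (hmj η₀ hη₀)
      (hε _ (hj η₀ hη₀))).trans_le (hmono.monotoneOn hη₀ hη (D.min'_le η hη))
  have hnotin : ε (i η₀) * ρ ^ i η₀ ∉ D.image fun η => ε (j η) * ρ ^ j η := by
    simp only [Finset.mem_image, not_exists, not_and]
    exact fun η hη h => (hbelow η hη).ne' h
  have hsub : insert (ε (i η₀) * ρ ^ i η₀) (D.image fun η => ε (j η) * ρ ^ j η) ⊆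
      J.image fun j => ε j * ρ ^ j := by
    refine Finset.insert_subset (Finset.mem_image_of_mem _ (hi η₀ hη₀)) fun _ hx => ?_
    obtain ⟨η, hη, rfl⟩ := Finset.mem_image.1 hx
    exact Finset.mem_image_of_mem _ (hj η hη)
  have := Finset.card_le_card hsub
  rw [Finset.card_insert_of_notMem hnotin, Finset.card_image_of_injOn hmono.injOn] at this
  omega

end UpperEnvelope

theorem Polynomial.taylor_coeff_mul_pow_eq_sum {R : Type*} [CommSemiring R] {ι : Type*}
    (s : Finset ι) (a : ι → R) (n : ι → ℕ) (x : R) (j : ℕ) :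
    (taylor x (∑ i ∈ s, C (a i) * X ^ n i)).coeff j * x ^ j =
      ∑ i ∈ s, ((n i).choose j : R) * (a i * x ^ n i) := by
  rw [taylor_coeff, map_sum, eval_finsetSum, Finset.sum_mul]
  refine Finset.sum_congr rfl fun i _ => ?_
  rw [C_mul_X_pow_eq_monomial, hasseDeriv_monomial, eval_monomial]
  rcases le_or_gt j (n i) with hj | hj
  · rw [mul_assoc, ← pow_add, Nat.sub_add_cancel hj]
    ring
  · simp [Nat.choose_eq_zero_of_lt hj]

theorem Polynomial.taylor_coeff_mul_pow_mem_span {R : Type*} [CommRing R] {F : Type*} [Ring F]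
    [Module F R] {k : ℕ} (a : Fin (k + 1) → R) (n : Fin (k + 1) → ℕ) {x : R}
    (hx : (∑ i, C (a i) * X ^ n i).IsRoot x) (j : ℕ) :
    (taylor x (∑ i, C (a i) * X ^ n i)).coeff j * x ^ j ∈
      Submodule.span F (Set.range fun i : Fin k => a i.succ * x ^ n i.succ) := by
  have hsum : ∑ i, a i * x ^ n i = 0 := by simpa [IsRoot, eval_finsetSum] using hx
  -- subtracting `(n 0).choose j • f x = 0` removes the `i = 0` term
  have hcomb : ∑ i, ((n i).choose j : R) * (a i * x ^ n i) =
      ∑ i : Fin k, (((n i.succ).choose j : ℤ) - (n 0).choose j) • (a i.succ * x ^ n i.succ) := by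
    rw [← sub_zero (∑ i, _), ← mul_zero ((n 0).choose j : R), ← hsum, Finset.mul_sum,
      ← Finset.sum_sub_distrib, Fin.sum_univ_succ]
    simp [zsmul_eq_mul, sub_mul]
  rw [taylor_coeff_mul_pow_eq_sum, hcomb]
  exact Submodule.sum_mem _ fun i _ => zsmul_mem (Submodule.subset_span (Set.mem_range_self i)) _

namespace Valuation

variable {K : Type*} [Field K] {Γ₀ : Type*} [LinearOrderedCommGroupWithZero Γ₀] (v : Valuation K Γ₀)

open IsLocalRing
open scoped Classical

theorem exists_ne_isMaxOn_of_sum_eq_zero {ι : Type*} {s : Finset ι} {t : ι → K}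
    (hs : ∃ i ∈ s, t i ≠ 0) (hsum : ∑ i ∈ s, t i = 0) :
    ∃ i ∈ s, ∃ j ∈ s, i ≠ j ∧ IsMaxOn (fun l => v (t l)) s i ∧ IsMaxOn (fun l => v (t l)) s j := by
  obtain ⟨i₀, hi₀, hti₀⟩ := hs
  obtain ⟨i, hi, hmax⟩ := s.exists_max_image (fun l => v (t l)) ⟨i₀, hi₀⟩
  by_cases h : ∃ j ∈ s, j ≠ i ∧ v (t j) = v (t i)
  · obtain ⟨j, hj, hji, hvj⟩ := h
    exact ⟨i, hi, j, hj, hji.symm, isMaxOn_iff.2 hmax, isMaxOn_iff.2 fun l hl => hvj ▸ hmax l hl⟩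
  · push Not at h
    have hlt : ∀ l ∈ s \ {i}, v (t l) < v (t i) := fun l hl => by
      rw [Finset.mem_sdiff, Finset.mem_singleton] at hl
      exact (hmax l hl.1).lt_of_ne (h l hl.1 hl.2)
    have hvi : v (t i) = 0 := by rw [← v.map_sum_eq_of_lt hi hlt, hsum, map_zero]
    exact absurd (le_antisymm (hvi ▸ hmax i₀ hi₀) zero_le) (v.ne_zero_iff.2 hti₀)

theorem map_algebraMap_eq_one {F : Type*} [Field F] [Finite F] [Algebra F K] {c : F} (hc : c ≠ 0) :
    v (algebraMap F K c) = 1 := by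
  have : Fintype F := Fintype.ofFinite F
  have hpow : v (algebraMap F K c) ^ (Fintype.card F - 1) = 1 := by
    rw [← map_pow, ← map_pow, FiniteField.pow_card_sub_one_eq_one c hc, map_one, map_one]
  have := Fintype.one_lt_card (α := F)
  exact (pow_eq_one_iff.1 hpow).resolve_right (by omega)

theorem linearIndependent_of_injective {F : Type*} [Field F] [Finite F] [Algebra F K] {ι : Type*}
    {w : ι → K} (hw : ∀ i, w i ≠ 0) (hinj : Function.Injective fun i => v (w i)) :
    LinearIndependent F w := by
  rw [linearIndependent_iff']
  intro s c hsum i hi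
  by_contra hci
  obtain ⟨l, hl, m, hm, hlm, hmaxl, hmaxm⟩ :=
    v.exists_ne_isMaxOn_of_sum_eq_zero ⟨i, hi, smul_ne_zero hci (hw i)⟩ hsum
  have hval : ∀ l ∈ s, IsMaxOn (fun l => v (c l • w l)) s l → v (c l • w l) = v (w l) := by
    intro l hl hmax
    have hcl : c l ≠ 0 := by
      rintro hcl
      simpa [hcl, hci, hw i] using hmax hi
    rw [Algebra.smul_def, map_mul, v.map_algebraMap_eq_one hcl, one_mul]
  refine hlm (hinj ?_)
  simp only [← hval l hl hmaxl, ← hval m hm hmaxm]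
  exact le_antisymm (hmaxm hl) (hmaxl hm)

theorem card_image_le_finrank {F : Type*} [Field F] [Finite F] [Algebra F K] (W : Submodule F K)
    [Module.Finite F W] {s : Finset K} (hs0 : 0 ∉ s) (hsW : ∀ x ∈ s, x ∈ W) :
    (s.image v).card ≤ Module.finrank F W := by
  choose x hxs hxv using fun γ : s.image v => Finset.mem_image.1 γ.2
  have hli : LinearIndependent F fun γ => (⟨x γ, hsW _ (hxs γ)⟩ : W) := by
    refine LinearIndependent.of_comp W.subtype ?_
    refine v.linearIndependent_of_injective (fun γ h => hs0 (h ▸ hxs γ)) fun γ δ h => ?_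
    exact Subtype.ext (by simpa [hxv] using h)
  simpa using hli.fintype_card_le_finrank

noncomputable def distances (S : Finset K) (x : K) : Finset Γ₀ :=
  (S.erase x).image fun y => v (x - y)

theorem mem_distances {S : Finset K} {x : K} {γ : Γ₀} :
    γ ∈ v.distances S x ↔ ∃ y ∈ S, y ≠ x ∧ v (x - y) = γ := by
  simp only [distances, Finset.mem_image, Finset.mem_erase]
  exact exists_congr fun y => by tauto

theorem exists_ne_isMaxOn_taylor {f : K[X]} (hf0 : f ≠ 0) {x y : K} (hy : f.IsRoot y)
    (hxy : x ≠ y) :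
    ∃ i ∈ (taylor x f).support, ∃ j ∈ (taylor x f).support, i ≠ j ∧
      IsMaxOn (fun l => v ((taylor x f).coeff l) * v (x - y) ^ l) (taylor x f).support i ∧
      IsMaxOn (fun l => v ((taylor x f).coeff l) * v (x - y) ^ l) (taylor x f).support j := by
  have hsum : (taylor x f).eval (y - x) = 0 := by rw [taylor_eval, sub_add_cancel]; exact hy
  rw [eval_eq_sum, sum_def] at hsum
  obtain ⟨j, hj⟩ := support_nonempty.2 ((taylor_eq_zero x f).not.2 hf0)
  simpa only [map_mul, map_pow, v.map_sub_swap y x] using v.exists_ne_isMaxOn_of_sum_eq_zero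
    ⟨j, hj, mul_ne_zero (mem_support_iff.1 hj) (pow_ne_zero j (sub_ne_zero.2 hxy.symm))⟩ hsum

theorem card_filter_distances_lt_le {p : ℕ} [Fact p.Prime] [CharP K p] {k : ℕ}
    (a : Fin (k + 1) → K) (n : Fin (k + 1) → ℕ) {f : K[X]} (hf : f = ∑ i, C (a i) * X ^ n i)
    (hf0 : f ≠ 0) {S : Finset K} (hS : ∀ y ∈ S, f.IsRoot y) {x : K} (hx : f.IsRoot x)
    (hx0 : x ≠ 0) :
    ((v.distances S x).filter (· < v x)).card ≤ k - 1 := by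
  let _ := ZMod.algebra K p
  set W := Submodule.span (ZMod p) (Set.range fun i : Fin k => a i.succ * x ^ n i.succ)
  have : Module.Finite (ZMod p) W := Module.Finite.span_of_finite _ (Set.finite_range _)
  have hJ : ∀ j ∈ (taylor x f).support, v ((taylor x f).coeff j) ≠ 0 := fun j hj =>
    v.ne_zero_iff.2 (mem_support_iff.1 hj)
  have hvalues : ((taylor x f).support.image fun j => v ((taylor x f).coeff j) * v x ^ j) =
      ((taylor x f).support.image fun j => (taylor x f).coeff j * x ^ j).image v := by
    simp only [Finset.image_image, Function.comp_def, map_mul, map_pow]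
  calc ((v.distances S x).filter (· < v x)).card
      ≤ ((taylor x f).support.image fun j => v ((taylor x f).coeff j) * v x ^ j).card - 1 := by
        refine card_le_card_image_sub_one hJ _ fun η hη => ?_
        obtain ⟨hη, hηx⟩ := Finset.mem_filter.1 hη
        obtain ⟨y, hyS, hyx, rfl⟩ := v.mem_distances.1 hη
        exact ⟨v.ne_zero_iff.2 (sub_ne_zero.2 hyx.symm), hηx,
          v.exists_ne_isMaxOn_taylor hf0 (hS y hyS) hyx.symm⟩
    _ ≤ Module.finrank (ZMod p) W - 1 := by
        rw [hvalues]
        refine Nat.sub_le_sub_right (v.card_image_le_finrank W ?_ ?_) 1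
        · simp [hx0]
        · simp only [Finset.mem_image]
          rintro _ ⟨j, -, rfl⟩
          exact hf ▸ taylor_coeff_mul_pow_mem_span a n (hf ▸ hx) j
    _ ≤ k - 1 := Nat.sub_le_sub_right ((finrank_range_le_card _).trans (Fintype.card_fin k).le) 1

noncomputable def residueOf (x : K) : ResidueField v.valuationSubring :=
  if h : v x ≤ 1 then residue _ ⟨x, h⟩ else 0

theorem residueOf_eq_zero_iff {x : K} (hx : v x ≤ 1) : v.residueOf x = 0 ↔ v x < 1 := by
  rw [residueOf, dif_pos hx, residue_eq_zero_iff, mem_maximalIdeal_iff]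

theorem residueOf_eq_iff {x y : K} (hx : v x ≤ 1) (hy : v y ≤ 1) :
    v.residueOf x = v.residueOf y ↔ v (x - y) < 1 := by
  have hxy : v (x - y) ≤ 1 := v.map_sub_le hx hy
  rw [← sub_eq_zero, ← v.residueOf_eq_zero_iff hxy, residueOf, residueOf, residueOf, dif_pos hx,
    dif_pos hy, dif_pos hxy, ← _root_.map_sub]
  rfl

theorem residueOf_div_eq_iff {x y d : K} (hd : d ≠ 0) (hx : v x ≤ v d) (hy : v y ≤ v d) :
    v.residueOf (x / d) = v.residueOf (y / d) ↔ v (x - y) < v d := by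
  have hvd := zero_lt_iff.2 (v.ne_zero_iff.2 hd)
  rw [v.residueOf_eq_iff (by rwa [map_div₀, div_le_one₀ hvd]) (by rwa [map_div₀, div_le_one₀ hvd]),
    ← sub_div, map_div₀, div_lt_one₀ hvd]

theorem distances_filter_residueOf_eq {c d : K} (hd : d ≠ 0) {S : Finset K}
    (hS : ∀ x ∈ S, v (x - c) ≤ v d) {β : ResidueField v.valuationSubring} {x : K} (hx : x ∈ S)
    (hxβ : v.residueOf ((x - c) / d) = β) :
    v.distances (S.filter fun y => v.residueOf ((y - c) / d) = β) x =
      (v.distances S x).filter (· < v d) := by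
  rw [Finset.filter_congr (q := fun y => v (x - y) < v d) fun y hy => by
    rw [← hxβ, v.residueOf_div_eq_iff hd (hS y hy) (hS x hx), sub_sub_sub_cancel_right,
      v.map_sub_swap]]
  simp only [distances, Finset.filter_image, Finset.filter_erase]

theorem card_le_mul_card_image_residueOf {c d : K} (hd : d ≠ 0) {S : Finset K}
    (hS : ∀ x ∈ S, v (x - c) ≤ v d) {m r : ℕ}
    (hm : ∀ T : Finset K, (∀ x ∈ T, (v.distances T x).card ≤ r) → T.card ≤ m)
    (hr : ∀ x ∈ S, ((v.distances S x).filter (· < v d)).card ≤ r) :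
    S.card ≤ m * (S.image fun x => v.residueOf ((x - c) / d)).card := by
  refine Finset.card_le_mul_card_image S m fun β hβ => hm _ fun x hx => ?_
  obtain ⟨hxS, hxβ⟩ := Finset.mem_filter.1 hx
  rw [v.distances_filter_residueOf_eq hd hS hxS hxβ]
  exact hr x hxS

theorem mem_distances_of_forall_le {S : Finset K} {a b : K} (ha : a ∈ S) (hb : b ∈ S)
    (hab : a ≠ b) (hdiam : ∀ x ∈ S, ∀ y ∈ S, v (x - y) ≤ v (a - b)) {x : K} (hx : x ∈ S) :
    v (a - b) ∈ v.distances S x := by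
  have hreach : ∀ z ∈ S, ¬ v (x - z) < v (a - b) → v (a - b) ∈ v.distances S x :=
    fun z hz h => by
      have hxz := le_antisymm (hdiam x hx z hz) (not_lt.1 h)
      refine v.mem_distances.2 ⟨z, hz, fun hzx => hab ?_, hxz⟩
      rwa [hzx, sub_self, map_zero, eq_comm, v.zero_iff, sub_eq_zero] at hxz
  by_cases hxa : v (x - a) < v (a - b)
  · exact hreach b hb fun hxb => (v.map_sub_lt hxb hxa).ne (by rw [sub_sub_sub_cancel_left])
  · exact hreach a ha hxa

theorem card_le_pow_of_card_distances_le [Finite (ResidueField v.valuationSubring)] (r : ℕ)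
    {S : Finset K} (hS : ∀ x ∈ S, (v.distances S x).card ≤ r) :
    S.card ≤ Nat.card (ResidueField v.valuationSubring) ^ r := by
  induction r generalizing S with
  | zero =>
    refine (Finset.card_le_one.2 fun x hx y hy => ?_).trans (pow_zero _).ge
    by_contra hxy
    have hmem : v (x - y) ∈ v.distances S x := v.mem_distances.2 ⟨y, hy, Ne.symm hxy, rfl⟩
    rw [Finset.card_eq_zero.1 (Nat.le_zero.1 (hS x hx))] at hmem
    exact Finset.notMem_empty _ hmem
  | succ r ih =>
    rcases le_or_gt S.card 1 with hS1 | hS1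
    · exact hS1.trans (Nat.one_le_pow _ _ Nat.card_pos)
    obtain ⟨x, hx, y, hy, hxy⟩ := Finset.one_lt_card.1 hS1
    obtain ⟨⟨a, b⟩, hab, hmax⟩ := S.offDiag.exists_max_image (fun p => v (p.1 - p.2))
      ⟨(x, y), Finset.mem_offDiag.2 ⟨hx, hy, hxy⟩⟩
    obtain ⟨ha, hb, hab⟩ : a ∈ S ∧ b ∈ S ∧ a ≠ b := Finset.mem_offDiag.1 hab
    have hdiam : ∀ x ∈ S, ∀ y ∈ S, v (x - y) ≤ v (a - b) := fun x hx y hy => by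
      rcases eq_or_ne x y with rfl | hxy
      · simp
      · exact hmax (x, y) (Finset.mem_offDiag.2 ⟨hx, hy, hxy⟩)
    have hclose : ∀ x ∈ S, ((v.distances S x).filter (· < v (a - b))).card ≤ r := fun x hx =>
      Nat.lt_succ_iff.1 <| (Finset.card_lt_card <| (Finset.filter_ssubset (p := (· < v (a - b)))).2
        ⟨_, v.mem_distances_of_forall_le ha hb hab hdiam hx, lt_irrefl _⟩).trans_le (hS x hx)
    calc S.card
        ≤ Nat.card (ResidueField v.valuationSubring) ^ r *
            (S.image fun x => v.residueOf ((x - b) / (a - b))).card :=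
          v.card_le_mul_card_image_residueOf (sub_ne_zero.2 hab) (fun x hx => hdiam x hx b hb)
            (fun T hT => ih hT) hclose
      _ ≤ Nat.card (ResidueField v.valuationSubring) ^ r *
            Nat.card (ResidueField v.valuationSubring) := by
          have := Fintype.ofFinite (ResidueField v.valuationSubring)
          exact Nat.mul_le_mul_left _
            ((Finset.card_le_univ _).trans_eq Nat.card_eq_fintype_card.symm)
      _ = _ := (pow_succ _ _).symm

theorem card_le_of_card_filter_distances_lt_le [Finite (ResidueField v.valuationSubring)] {g : Γ₀}
    (hg : g ≠ 0) {S : Finset K} (hSg : ∀ x ∈ S, v x = g) {r : ℕ}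
    (hr : ∀ x ∈ S, ((v.distances S x).filter (· < g)).card ≤ r) :
    S.card ≤ (Nat.card (ResidueField v.valuationSubring) - 1) *
      Nat.card (ResidueField v.valuationSubring) ^ r := by
  rcases S.eq_empty_or_nonempty with rfl | ⟨x₀, hx₀⟩
  · simp
  have hx₀0 : x₀ ≠ 0 := v.ne_zero_iff.1 ((hSg x₀ hx₀).symm ▸ hg)
  have := Fintype.ofFinite (ResidueField v.valuationSubring)
  calc S.card
      ≤ Nat.card (ResidueField v.valuationSubring) ^ r *
          (S.image fun x => v.residueOf ((x - 0) / x₀)).card :=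
        v.card_le_mul_card_image_residueOf hx₀0
          (fun x hx => by rw [sub_zero, hSg x hx, hSg x₀ hx₀])
          (fun T hT => v.card_le_pow_of_card_distances_le r hT)
          (by simpa only [hSg x₀ hx₀] using hr)
    _ ≤ Nat.card (ResidueField v.valuationSubring) ^ r *
          (Nat.card (ResidueField v.valuationSubring) - 1) := by
        refine Nat.mul_le_mul_left _ (Nat.le_sub_one_of_lt ?_)
        rw [Nat.card_eq_fintype_card]
        refine Finset.card_lt_univ_of_notMem (x := 0) ?_
        simp only [Finset.mem_image, not_exists, not_and]
        intro x hx h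
        have hx1 : v (x / x₀) = 1 := by rw [map_div₀, hSg x hx, hSg x₀ hx₀, div_self hg]
        rw [sub_zero, v.residueOf_eq_zero_iff hx1.le, hx1] at h
        exact lt_irrefl _ h
    _ = _ := mul_comm _ _

end Valuation

theorem zeros_of_fixed_valuation_bound_general
    {K : Type*} [Field K] {p : ℕ} [hp : Fact p.Prime] [CharP K p]
    {Γ₀ : Type*} [LinearOrderedCommGroupWithZero Γ₀] (v : Valuation K Γ₀)
    {q : ℕ}
    (hq : Nat.card (IsLocalRing.ResidueField v.valuationSubring) = q)
    (hq0 : 0 < q)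
    {k : ℕ}
    (a : Fin (k + 1) → K) (ha : ∀ i, a i ≠ 0)
    (n : Fin (k + 1) → ℕ) (hn : StrictMono n)
    (f : Polynomial K)
    (hf : f = ∑ i, Polynomial.C (a i) * Polynomial.X ^ (n i))
    (g : Γ₀) (hg : g ≠ 0) :
    {x : K | Polynomial.eval x f = 0 ∧ v x = g}.ncard ≤ (q - 1) * q ^ (k - 1) := by
  classical
  have hf0 : f ≠ 0 := fun h => ha 0 (by
    simpa [h, finsetSum_coeff, coeff_C_mul_X_pow, hn.injective.eq_iff] using
      (congrArg (coeff · (n 0)) hf).symm)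
  have : Finite (IsLocalRing.ResidueField v.valuationSubring) :=
    Nat.finite_of_card_ne_zero (hq ▸ hq0.ne')
  have hfin : {x : K | eval x f = 0 ∧ v x = g}.Finite :=
    f.roots.toFinset.finite_toSet.subset fun x hx => by simpa [hf0] using hx.1
  rw [Set.ncard_eq_toFinset_card _ hfin, ← hq]
  refine v.card_le_of_card_filter_distances_lt_le hg (fun x hx => (hfin.mem_toFinset.1 hx).2)
    fun x hx => ?_
  obtain ⟨hxf, hxg⟩ := hfin.mem_toFinset.1 hx
  have := v.card_filter_distances_lt_le a n hf hf0 (fun y hy => (hfin.mem_toFinset.1 hy).1) hxf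
    (v.ne_zero_iff.1 (hxg ▸ hg))
  rwa [hxg] at this

theorem zeros_of_fixed_valuation_bound
    {K : Type*} [Field K] {p : ℕ} [hp : Fact p.Prime] [CharP K p]
    {Γ₀ : Type*} [LinearOrderedCommGroupWithZero Γ₀] (v : Valuation K Γ₀)
    {q : ℕ}
    (hq : Nat.card (IsLocalRing.ResidueField v.valuationSubring) = q)
    (hq0 : 0 < q)
    {k : ℕ} (hk : 1 ≤ k)
    (a : Fin (k + 1) → K) (ha : ∀ i, a i ≠ 0)
    (n : Fin (k + 1) → ℕ) (hn : StrictMono n)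
    (f : Polynomial K)
    (hf : f = ∑ i, Polynomial.C (a i) * Polynomial.X ^ (n i))
    (g : Γ₀) (hg : g ≠ 0) :
    {x : K | Polynomial.eval x f = 0 ∧ v x = g}.ncard ≤ (q - 1) * q ^ (k - 1) :=
  zeros_of_fixed_valuation_bound_general (p := p) (hp := hp) v hq hq0 a ha n hn f hf g hg
end

section
/- Every valued field has a maximally complete immediate extension. Precisely: let K be a field with a valuation v : K* → G. Then there exists an immediate extension (M, u) of (K, v) such that (M, u) is maximally complete, i.e., (M, u) admits no immediate extension (N, t) with N strictly larger than M. -/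
universe u v

/-!
STATEMENT 11 (Krull: every valued field has a maximally complete immediate
extension).

Valuations are encoded multiplicatively: a Mathlib `Valuation v : K → Γ₀` with
`Γ₀` a `LinearOrderedCommGroupWithZero` corresponds to an additive valuation
`v : K* → G`.  An extension `(M, u) ⊇ (K, v)` is *immediate* if it has the same
value group (`u(M*) = v(K*)`; since the value groups agree we may take the
valuation of the extension with values in the same `Γ₀`) and the same residue
field (the induced embedding of residue fields is an isomorphism; it is
automatically injective, so this says every element of `O_M` is congruent
mod `m_M` to an element of `O_K`).  A valued field is *maximally complete* if
every immediate extension of it is trivial, i.e. the field embedding is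
surjective.
-/

/-- `(M, u)` together with the embedding `ι : K → M` is an immediate extension
of `(K, v)`: `u` restricts to `v`, the value groups coincide, and the residue
fields coincide. -/
def IsImmediateExtension {K : Type u} {M : Type v} [Field K] [Field M]
    {Γ₀ : Type*} [LinearOrderedCommGroupWithZero Γ₀]
    (v : Valuation K Γ₀) (u : Valuation M Γ₀) (ι : K →+* M) : Prop :=
  (∀ x : K, u (ι x) = v x) ∧
  (∀ y : M, y ≠ 0 → ∃ x : K, x ≠ 0 ∧ v x = u y) ∧
  (∀ y : M, u y ≤ 1 → ∃ x : K, v x ≤ 1 ∧ u (y - ι x) < 1)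

/-- `(M, u)` is maximally complete: it admits no nontrivial immediate
extension. -/
def IsMaximallyComplete {M : Type u} [Field M]
    {Γ₀ : Type v} [LinearOrderedCommGroupWithZero Γ₀]
    (u : Valuation M Γ₀) : Prop :=
  ∀ (N : Type u) (_ : Field N) (t : Valuation N Γ₀) (j : M →+* N),
    IsImmediateExtension u t j → Function.Surjective j

/-!
An immediate extension `(L, w)` of `(K, v)` has at most `#K ^ #K` elements (Krull's bound): every
nonzero `z ∈ L` has some `a ∈ K` with `w (z - a) < w z`, and these approximations, taken for
`x - p` with `p` a canonical point of the ball of radius `v b` around `x` (`b ∈ K`), determine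
`x`. So all immediate extensions of `K` and of its immediate extensions embed into one fixed set `S`
with `#K ^ #K < #S`. The immediate extensions living in `S`, ordered by compatible embeddings, are
inductive since the direct limit of a chain is again immediate; a maximal one `M` is maximally
complete because any immediate extension of `M` can be embedded into `S` compatibly with `M`.
-/
open Cardinal

namespace IsImmediateExtension

variable {K L N : Type*} [Field K] [Field L] [Field N]
  {Γ₀ : Type*} [LinearOrderedCommGroupWithZero Γ₀]
  {v : Valuation K Γ₀} {w : Valuation L Γ₀} {t : Valuation N Γ₀} {ι : K →+* L}

theorem refl (v : Valuation K Γ₀) : IsImmediateExtension v v (RingHom.id K) :=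
  ⟨fun _ => rfl, fun y hy => ⟨y, hy, rfl⟩, fun y hy => ⟨y, hy, by simp⟩⟩

theorem trans {j : L →+* N} (h₁ : IsImmediateExtension v w ι)
    (h₂ : IsImmediateExtension w t j) : IsImmediateExtension v t (j.comp ι) := by
  refine ⟨fun x => by rw [RingHom.comp_apply, h₂.1, h₁.1], fun z hz => ?_, fun z hz => ?_⟩
  · obtain ⟨y, hy, hyz⟩ := h₂.2.1 z hz
    obtain ⟨x, hx, hxy⟩ := h₁.2.1 y hy
    exact ⟨x, hx, hxy.trans hyz⟩
  · obtain ⟨y, hy, hzy⟩ := h₂.2.2 z hz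
    obtain ⟨x, hx, hyx⟩ := h₁.2.2 y hy
    refine ⟨x, hx, ?_⟩
    calc t (z - j (ι x)) = t ((z - j y) + j (y - ι x)) := by rw [map_sub (f := j)]; ring_nf
      _ ≤ max (t (z - j y)) (t (j (y - ι x))) := t.map_add _ _
      _ < 1 := max_lt hzy (by rwa [h₂.1])

theorem of_ringEquiv (e : N ≃+* L) :
    IsImmediateExtension w (w.comap e.toRingHom) e.symm.toRingHom :=
  ⟨fun _ => by simp, fun y hy => ⟨e y, by simpa using hy, rfl⟩,
    fun y hy => ⟨e y, hy, by simp⟩⟩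

theorem exists_sub_lt (h : IsImmediateExtension v w ι) {z : L} (hz : z ≠ 0) :
    ∃ a : K, w (z - ι a) < w z := by
  obtain ⟨c, hc, hcz⟩ := h.2.1 z hz
  have hιc : ι c ≠ 0 := (map_ne_zero ι).2 hc
  have hunit : w (z * (ι c)⁻¹) ≤ 1 := by
    rw [map_mul, map_inv₀, h.1, hcz, mul_inv_cancel₀ ((Valuation.ne_zero_iff w).2 hz)]
  obtain ⟨a, -, ha⟩ := h.2.2 _ hunit
  refine ⟨c * a, ?_⟩
  have hfactor : z - ι (c * a) = ι c * (z * (ι c)⁻¹ - ι a) := by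
    rw [map_mul]; field_simp
  calc w (z - ι (c * a)) = w z * w (z * (ι c)⁻¹ - ι a) := by rw [hfactor, map_mul, h.1, hcz]
    _ < w z * 1 := mul_lt_mul_of_pos_left ha (zero_lt_iff.2 ((Valuation.ne_zero_iff w).2 hz))
    _ = w z := mul_one _

end IsImmediateExtension

namespace Valuation

section

variable {L : Type*} [Ring L] {Γ₀ : Type*} [LinearOrderedCommGroupWithZero Γ₀]
  (w : Valuation L Γ₀)

/-- A point of the closed ball `{y | w (y - x) ≤ γ}` that depends only on the ball, not on the
center `x`. -/
noncomputable def ballPoint (γ : Γ₀) (x : L) : L :=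
  Classical.epsilon fun y => w (y - x) ≤ γ

variable {w}

theorem ballPoint_sub_le (γ : Γ₀) (x : L) : w (w.ballPoint γ x - x) ≤ γ :=
  Classical.epsilon_spec (p := fun y => w (y - x) ≤ γ) ⟨x, by simp⟩

theorem ballPoint_congr {γ : Γ₀} {x y : L} (h : w (x - y) ≤ γ) :
    w.ballPoint γ x = w.ballPoint γ y := by
  have hyx : w (y - x) ≤ γ := by rwa [map_sub_swap]
  unfold ballPoint
  congr 1
  ext z
  constructor <;> intro hz
  · calc w (z - y) = w ((z - x) + (x - y)) := by abel_nf
      _ ≤ γ := w.map_add_le hz h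
  · calc w (z - x) = w ((z - y) + (y - x)) := by abel_nf
      _ ≤ γ := w.map_add_le hz hyx

end

/-- `x` is recorded through the codes of `x - p`, where `p` runs through the canonical points of
the balls around `x` of radii `ρ i`; two distinct elements are separated by the ball whose radius
is their distance. -/
theorem mk_le_power_of_code {L C I : Type u} [Ring L] {Γ₀ : Type*}
    [LinearOrderedCommGroupWithZero Γ₀] (w : Valuation L Γ₀) (ρ : I → Γ₀)
    (hρ : ∀ z : L, z ≠ 0 → ∃ i, ρ i = w z) (code : L → C)
    (hcode : ∀ z z', code z = code z' → z = z' ∨ w (z - z') < max (w z) (w z')) :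
    #L ≤ #C ^ #I := by
  rw [power_def]
  refine mk_le_of_injective (f := fun x i => code (x - w.ballPoint (ρ i) x)) fun x y hxy => ?_
  by_contra hne
  obtain ⟨i, hi⟩ := hρ (x - y) (sub_ne_zero.2 hne)
  have hp : w.ballPoint (ρ i) x = w.ballPoint (ρ i) y := ballPoint_congr hi.ge
  have hclose : ∀ z, w (z - w.ballPoint (ρ i) z) ≤ ρ i := fun z => by
    rw [map_sub_swap]; exact ballPoint_sub_le _ _
  rcases hcode _ _ (congrFun hxy i) with heq | hlt
  · exact hne (by rw [hp] at heq; simpa using heq)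
  · rw [hp, sub_sub_sub_cancel_right, ← hi] at hlt
    exact (lt_of_lt_of_le hlt (max_le (hp ▸ hclose x) (hclose y))).false

end Valuation

theorem IsImmediateExtension.mk_le {K L : Type u} [Field K] [Field L]
    {Γ₀ : Type*} [LinearOrderedCommGroupWithZero Γ₀]
    {v : Valuation K Γ₀} {w : Valuation L Γ₀} {ι : K →+* L}
    (h : IsImmediateExtension v w ι) : #L ≤ #K ^ #K := by
  classical
  choose approx happrox using fun (z : L) (hz : z ≠ 0) => h.exists_sub_lt hz
  have happrox_ne : ∀ z (hz : z ≠ 0), approx z hz ≠ 0 := fun z hz h0 =>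
    (happrox z hz).ne (by rw [h0, map_zero, sub_zero])
  refine w.mk_le_power_of_code v (fun z hz => (h.2.1 z hz).imp fun _ => And.right)
    (fun z => if hz : z = 0 then 0 else approx z hz) fun z z' hcode => ?_
  by_cases hz : z = 0 <;> by_cases hz' : z' = 0 <;>
    simp only [hz, hz', dite_true, dite_false] at hcode
  · exact .inl (hz.trans hz'.symm)
  · exact absurd hcode.symm (happrox_ne z' hz')
  · exact absurd hcode (happrox_ne z hz)
  · refine .inr ?_
    calc w (z - z') = w ((z - ι (approx z hz)) - (z' - ι (approx z' hz'))) := by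
          rw [hcode, sub_sub_sub_cancel_right]
      _ ≤ max (w (z - ι (approx z hz))) (w (z' - ι (approx z' hz'))) := w.map_sub _ _
      _ < max (w z) (w z') := max_lt_max (happrox z hz) (happrox z' hz')

theorem Function.Embedding.exists_extension {M N S : Type u} (j : M ↪ N) (e : M ↪ S)
    (h : #N ≤ #↥(Set.range e)ᶜ) : ∃ g : N ↪ S, ∀ x, g (j x) = e x := by
  classical
  obtain ⟨k⟩ : Nonempty (↥(Set.range j)ᶜ ↪ ↥(Set.range e)ᶜ) :=
    (Cardinal.le_def _ _).1 ((mk_subtype_le _).trans h)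
  let r : Set.range j ≃ Set.range e :=
    (Equiv.ofInjective j j.injective).symm.trans (Equiv.ofInjective e e.injective)
  refine ⟨(Equiv.Set.sumCompl (Set.range j)).symm.toEmbedding.trans
    ((r.toEmbedding.sumMap k).trans (Equiv.Set.sumCompl (Set.range e)).toEmbedding), fun x => ?_⟩
  simp [Equiv.Set.sumCompl_symm_apply_of_mem (Set.mem_range_self x), r]

/-- The embedding into `S` keeps the union of a chain of these in universe `u`, and makes a maximal
one absorb every immediate extension of it that re-embeds compatibly into `S`. -/
structure ImmediateExtensionIn {K : Type u} [Field K] {Γ₀ : Type v}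
    [LinearOrderedCommGroupWithZero Γ₀] (v : Valuation K Γ₀) (S : Type u) where
  carrier : Type u
  [field : Field carrier]
  val : Valuation carrier Γ₀
  emb : K →+* carrier
  isImmediate : IsImmediateExtension v val emb
  toS : carrier ↪ S

namespace ImmediateExtensionIn

attribute [instance] field

variable {K : Type u} [Field K] {Γ₀ : Type v} [LinearOrderedCommGroupWithZero Γ₀]
  {v : Valuation K Γ₀} {S : Type u}

structure Hom (E F : ImmediateExtensionIn v S) where
  toRingHom : E.carrier →+* F.carrier
  toS_apply : ∀ x, F.toS (toRingHom x) = E.toS x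
  val_apply : ∀ x, F.val (toRingHom x) = E.val x
  comp_emb : toRingHom.comp E.emb = F.emb

instance : Preorder (ImmediateExtensionIn v S) where
  le E F := Nonempty (Hom E F)
  le_refl E := ⟨⟨RingHom.id _, fun _ => rfl, fun _ => rfl, rfl⟩⟩
  le_trans _ _ _ := fun ⟨f⟩ ⟨g⟩ =>
    ⟨⟨g.toRingHom.comp f.toRingHom, fun x => (g.toS_apply _).trans (f.toS_apply x),
      fun x => (g.val_apply _).trans (f.val_apply x),
      by rw [RingHom.comp_assoc, f.comp_emb, g.comp_emb]⟩⟩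

section Chain

variable (c : Set (ImmediateExtensionIn v S))

noncomputable def transition (E F : c) (h : E ≤ F) : E.1.carrier →+* F.1.carrier :=
  (Nonempty.some h : Hom E.1 F.1).toRingHom

variable {c}

theorem toS_transition {E F : c} (h : E ≤ F) (x : E.1.carrier) :
    F.1.toS (transition c E F h x) = E.1.toS x :=
  (Nonempty.some h : Hom E.1 F.1).toS_apply x

theorem val_transition {E F : c} (h : E ≤ F) (x : E.1.carrier) :
    F.1.val (transition c E F h x) = E.1.val x :=
  (Nonempty.some h : Hom E.1 F.1).val_apply x

theorem transition_emb {E F : c} (h : E ≤ F) (a : K) :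
    transition c E F h (E.1.emb a) = F.1.emb a :=
  RingHom.congr_fun (Nonempty.some h : Hom E.1 F.1).comp_emb a

instance : DirectedSystem (fun E : c => E.1.carrier) (transition c · · ·) where
  map_self E x := E.1.toS.injective (toS_transition _ x)
  map_map _ _ _ _ _ _ := (toS_transition _ _).trans ((toS_transition _ _).trans
    (toS_transition _ _).symm) |> (ImmediateExtensionIn.toS _).injective

variable (c) [IsDirectedOrder c] [Nonempty c]

abbrev Limit : Type (max (u + 1) v) := DirectLimit (fun E : c => E.1.carrier) (transition c)

noncomputable def limitVal : Valuation (Limit c) Γ₀ where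
  toFun := DirectLimit.lift _ (fun E x => E.1.val x) fun _ _ h x => (val_transition h x).symm
  map_zero' := by
    rw [DirectLimit.zero_def (Classical.arbitrary c), DirectLimit.lift_def, map_zero]
  map_one' := by
    rw [DirectLimit.one_def (Classical.arbitrary c), DirectLimit.lift_def, map_one]
  map_mul' := DirectLimit.induction₂ _ fun E x y => by
    simp only [DirectLimit.mul_def, DirectLimit.lift_def, map_mul]
  map_add_le_max' := DirectLimit.induction₂ _ fun E x y => by
    simp only [DirectLimit.add_def, DirectLimit.lift_def]
    exact E.1.val.map_add x y

noncomputable abbrev limitOf (E : c) : E.1.carrier →+* Limit c :=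
  DirectLimit.Ring.of (fun E : c => E.1.carrier) (transition c) E

noncomputable def limitEmb : K →+* Limit c :=
  (limitOf c (Classical.arbitrary c)).comp (Classical.arbitrary c).1.emb

noncomputable def limitToS : Limit c ↪ S :=
  ⟨DirectLimit.lift _ (fun E x => E.1.toS x) fun _ _ h x => (toS_transition h x).symm,
    DirectLimit.lift_injective _ _ _ fun E => E.1.toS.injective⟩

variable {c}

theorem limitVal_of (E : c) (x : E.1.carrier) :
    limitVal c (limitOf c E x) = E.1.val x := rfl

theorem of_emb (E : c) (a : K) : limitOf c E (E.1.emb a) = limitEmb c a := by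
  obtain ⟨F, hEF, hF⟩ := exists_ge_ge E (Classical.arbitrary c)
  rw [limitEmb, RingHom.comp_apply, ← DirectLimit.Ring.of_f hEF, ← DirectLimit.Ring.of_f hF,
    transition_emb, transition_emb]

theorem limit_isImmediate : IsImmediateExtension v (limitVal c) (limitEmb c) := by
  refine ⟨fun a => ?_, DirectLimit.induction _ fun E x hx => ?_,
    DirectLimit.induction _ fun E x hx => ?_⟩
  · rw [← of_emb (Classical.arbitrary c), limitVal_of, (Classical.arbitrary c).1.isImmediate.1]
  · have hx' : x ≠ 0 := fun h0 => hx (by rw [h0, ← DirectLimit.zero_def])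
    exact E.1.isImmediate.2.1 x hx'
  · obtain ⟨a, ha, hxa⟩ := E.1.isImmediate.2.2 x hx
    refine ⟨a, ha, ?_⟩
    show limitVal c (limitOf c E x - limitEmb c a) < 1
    rwa [← of_emb E, ← map_sub, limitVal_of]

instance : Small.{u} (Limit c) := small_of_injective (limitToS c).injective

variable (c) in
noncomputable def sup : ImmediateExtensionIn v S where
  carrier := Shrink.{u} (Limit c)
  val := (limitVal c).comap (Shrink.ringEquiv (Limit c)).toRingHom
  emb := (Shrink.ringEquiv (Limit c)).symm.toRingHom.comp (limitEmb c)
  isImmediate := limit_isImmediate.trans (IsImmediateExtension.of_ringEquiv _)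
  toS := (Shrink.ringEquiv (Limit c)).toEquiv.toEmbedding.trans (limitToS c)

theorem le_sup (E : c) : E.1 ≤ sup c :=
  ⟨⟨(Shrink.ringEquiv (Limit c)).symm.toRingHom.comp (limitOf c E),
    fun _ => congrArg (limitToS c) ((Shrink.ringEquiv _).apply_symm_apply _),
    fun _ => congrArg (limitVal c) ((Shrink.ringEquiv _).apply_symm_apply _),
    RingHom.ext fun a => congrArg (Shrink.ringEquiv _).symm (of_emb E a)⟩⟩

end Chain

theorem bddAbove_of_isChain {c : Set (ImmediateExtensionIn v S)} (hc : IsChain (· ≤ ·) c)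
    (hne : c.Nonempty) : BddAbove c :=
  have := hc.directedOn.isDirectedOrder
  have := hne.to_subtype
  ⟨sup c, fun E hE => le_sup ⟨E, hE⟩⟩

variable (v) in
theorem exists_isMax (e : K ↪ S) : ∃ m : ImmediateExtensionIn v S, IsMax m :=
  have : Nonempty (ImmediateExtensionIn v S) := ⟨⟨K, v, RingHom.id K, .refl v, e⟩⟩
  zorn_le_nonempty fun _ hc hne => bddAbove_of_isChain hc hne

theorem isMaximallyComplete_of_isMax [Infinite S] (hS : #K ^ #K < #S)
    {m : ImmediateExtensionIn v S} (hm : IsMax m) : IsMaximallyComplete m.val := by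
  intro N _ t j hj
  have hmS : #(Set.range m.toS) < #S := by
    rw [mk_range_eq _ m.toS.injective]; exact m.isImmediate.mk_le.trans_lt hS
  obtain ⟨g, hg⟩ := Function.Embedding.exists_extension ⟨j, j.injective⟩ m.toS <| by
    rw [mk_compl_of_infinite _ hmS]; exact ((m.isImmediate.trans hj).mk_le.trans_lt hS).le
  let E : ImmediateExtensionIn v S := ⟨N, t, j.comp m.emb, m.isImmediate.trans hj, g⟩
  obtain ⟨f⟩ : E ≤ m := hm ⟨⟨j, hg, hj.1, rfl⟩⟩
  exact fun n => ⟨f.toRingHom n, g.injective ((hg _).trans (f.toS_apply n))⟩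

end ImmediateExtensionIn

/-- Every valued field has a maximally complete immediate extension. -/
theorem exists_maximally_complete_immediate_extension
    {K : Type u} [Field K]
    {Γ₀ : Type v} [LinearOrderedCommGroupWithZero Γ₀] (v : Valuation K Γ₀) :
    ∃ (M : Type u) (_ : Field M) (u : Valuation M Γ₀) (ι : K →+* M),
      IsImmediateExtension v u ι ∧ IsMaximallyComplete u := by
  -- the factor `ℕ` makes `S` infinite
  let S := Set (ℕ × (K → K))
  have hS : #K ^ #K < #S := calc
    #K ^ #K = #(K → K) := power_def _ _
    _ ≤ #(ℕ × (K → K)) := mk_le_of_injective (Prod.mk_right_injective 0)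
    _ < #S := mk_set.symm ▸ cantor _
  have hKS : #K ≤ #S :=
    (self_le_power _ (Cardinal.one_le_iff_ne_zero.2 (mk_ne_zero K))).trans hS.le
  obtain ⟨m, hm⟩ := ImmediateExtensionIn.exists_isMax v ((Cardinal.le_def _ _).1 hKS).some
  exact ⟨m.carrier, m.field, m.val, m.emb, m.isImmediate,
    ImmediateExtensionIn.isMaximallyComplete_of_isMax hS hm⟩
end

section
/- Let (K, v) be a maximally complete valued field of characteristic p > 0 with divisible value group G = v(K*) and residue field F_q. Let F = F_{q^m} ⊆ K̄ be the finite field with q^m elements inside an algebraic closure of K, let L = F·K be the compositum, a Galois extension of K of degree m with Gal(L/K) ≅ Gal(F/F_q), and extend v to the (unique) valuation on L, which satisfies v(σ(x)) = v(x) for all σ ∈ Gal(L/K) and x ∈ L* and has value group G. Let x_0 ∈ L and g ∈ G, let D̄ = { x ∈ L : v(x − x_0) ≥ g } be the closed disk, and let I = { σ ∈ Gal(L/K) : σ(D̄) = D̄ } be the subgroup of the Galois group mapping D̄ into itself. Then there exists x_1 ∈ D̄ such that the open disk D(x_1, g) = { x ∈ L : v(x − x_1) > g } is mapped to itself by every σ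 ∈ I. -/
/-!
Valuations are multiplicative: the additive `v(x − x₀) ≥ g` is written `w (x - x₀) ≤ g`.

Let `T = ∑_{τ ∈ I} τ` and let `F = {x : x ^ q ^ m = x}`, a finite subfield of `L` that spans `L`
over `K`. By Dedekind's independence of characters `T ≠ 0`, so `T ζ ≠ 0` for some `ζ ∈ F`; then
`T ζ ∈ F` as well, hence `w (T ζ) = 1 ≥ w ζ`. The weighted average `x₁ = T (ζ x₀) / T ζ` is fixed
by `I`, and `x₁ - x₀ = (∑_{τ ∈ I} τ ζ · (τ x₀ - x₀)) / T ζ` lies in the closed disk because each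
`τ ∈ I` moves `x₀` by at most `g`. This is `H¹(I, F) = 0` in integral form. An open disk centred
at an `I`-fixed point is `I`-stable because `w` is Galois-invariant.
-/

universe u v

open scoped Pointwise

theorem Valuation.map_eq_one_of_pow_eq_self {R Γ₀ : Type*} [Ring R]
    [LinearOrderedCommGroupWithZero Γ₀] (w : Valuation R Γ₀) {x : R} (hx : w x ≠ 0) {n : ℕ}
    (hn : 2 ≤ n) (h : x ^ n = x) : w x = 1 := by
  have hpow : w x ^ (n - 1) * w x = 1 * w x := by
    rw [← pow_succ, Nat.sub_add_cancel (by omega), ← map_pow, h, one_mul]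
  exact (pow_eq_one_iff_left (by omega)).mp (mul_right_cancel₀ hx hpow)

theorem Submonoid.span_eq_top_of_adjoin_eq_top {K L : Type*} [Field K] [Field L] [Algebra K L]
    [Algebra.IsAlgebraic K L] (M : Submonoid L) (h : IntermediateField.adjoin K (M : Set L) = ⊤) :
    Submodule.span K (M : Set L) = ⊤ := by
  rw [← Submonoid.closure_eq M, ← Algebra.adjoin_eq_span, Algebra.toSubmodule_eq_top,
    ← IntermediateField.adjoin_toSubalgebra_of_isAlgebraic
      fun x _ ↦ Algebra.IsAlgebraic.isAlgebraic x, h, IntermediateField.top_toSubalgebra]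

namespace Subgroup

variable {K L : Type*} [Field K] [Field L] [Algebra K L] (H : Subgroup (L ≃ₐ[K] L)) [Fintype H]

/-- When `L/K` is Galois and `H = ⊤`, this is `Algebra.trace K L`. -/
def autTrace : L →ₗ[K] L := ∑ τ : H, (τ : L ≃ₐ[K] L).toLinearMap

@[simp]
theorem autTrace_apply (x : L) : H.autTrace x = ∑ τ : H, (τ : L ≃ₐ[K] L) x := by
  simp [autTrace]

theorem map_autTrace {σ : L ≃ₐ[K] L} (hσ : σ ∈ H) (x : L) : σ (H.autTrace x) = H.autTrace x := by
  rw [autTrace_apply, map_sum]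
  exact Fintype.sum_equiv (Equiv.mulLeft ⟨σ, hσ⟩) _ _ fun _ ↦ rfl

theorem autTrace_ne_zero : H.autTrace ≠ 0 := by
  intro h
  have hli := (linearIndependent_toLinearMap K L L).comp
    (fun τ : H ↦ ((τ : L ≃ₐ[K] L) : L →ₐ[K] L))
    fun _ _ hστ ↦ Subtype.ext (AlgEquiv.coe_toAlgHom_injective hστ)
  refine one_ne_zero (Fintype.linearIndependent_iff.mp hli (fun _ ↦ 1) ?_ 1)
  simpa [autTrace, AlgEquiv.toAlgHom_toLinearMap] using h

theorem exists_mem_autTrace_ne_zero {S : Set L} (hS : Submodule.span K S = ⊤) :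
    ∃ x ∈ S, H.autTrace x ≠ 0 := by
  by_contra! h
  exact H.autTrace_ne_zero (LinearMap.ext_on hS h)

theorem exists_fixed_valuation_sub_le {Γ₀ : Type*} [LinearOrderedCommGroupWithZero Γ₀]
    (w : Valuation L Γ₀) (hw : ∀ σ ∈ H, ∀ x, w (σ x) = w x)
    {ζ : L} (hζ : H.autTrace ζ ≠ 0) (hζw : w ζ ≤ w (H.autTrace ζ))
    {x₀ : L} {g : Γ₀} (hx₀ : ∀ σ ∈ H, w (σ x₀ - x₀) ≤ g) :
    ∃ x₁, w (x₁ - x₀) ≤ g ∧ ∀ σ ∈ H, σ x₁ = x₁ := by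
  refine ⟨H.autTrace (ζ * x₀) / H.autTrace ζ, ?_, fun σ hσ ↦ by
    rw [map_div₀, H.map_autTrace hσ, H.map_autTrace hσ]⟩
  have hdiff : H.autTrace (ζ * x₀) / H.autTrace ζ - x₀
      = (∑ τ : H, (τ : L ≃ₐ[K] L) ζ * ((τ : L ≃ₐ[K] L) x₀ - x₀)) / H.autTrace ζ := by
    rw [eq_div_iff hζ, sub_mul, div_mul_cancel₀ _ hζ]
    simp only [autTrace_apply, map_mul, mul_sub, Finset.sum_sub_distrib, Finset.sum_mul,
      mul_comm x₀]
  have hle : w (∑ τ : H, (τ : L ≃ₐ[K] L) ζ * ((τ : L ≃ₐ[K] L) x₀ - x₀)) ≤ g * w (H.autTrace ζ) :=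
    w.map_sum_le fun τ _ ↦ by
      rw [map_mul, hw _ τ.2, mul_comm]
      exact mul_le_mul' (hx₀ _ τ.2) hζw
  rwa [hdiff, map_div₀, div_le_iff₀ (w.pos_iff.mpr hζ)]

end Subgroup

def frobeniusFixedField (L : Type*) [Field L] (p k : ℕ) [ExpChar L p] : Subfield L :=
  (iterateFrobenius L p k).eqLocusField (RingHom.id L)

section frobeniusFixedField

variable {K L : Type*} [Field K] [Field L] [Algebra K L] {p k : ℕ} [ExpChar L p]

theorem mem_frobeniusFixedField {x : L} : x ∈ frobeniusFixedField L p k ↔ x ^ p ^ k = x :=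
  Iff.rfl

theorem AlgEquiv.map_mem_frobeniusFixedField (σ : L ≃ₐ[K] L) {x : L}
    (hx : x ∈ frobeniusFixedField L p k) : σ x ∈ frobeniusFixedField L p k := by
  rw [mem_frobeniusFixedField] at hx ⊢
  rw [← map_pow, hx]

theorem Subgroup.autTrace_mem_frobeniusFixedField (H : Subgroup (L ≃ₐ[K] L)) [Fintype H] {x : L}
    (hx : x ∈ frobeniusFixedField L p k) : H.autTrace x ∈ frobeniusFixedField L p k := by
  rw [autTrace_apply]
  exact sum_mem fun τ _ ↦ AlgEquiv.map_mem_frobeniusFixedField _ hx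

end frobeniusFixedField

theorem exists_galois_stable_open_disk_general
    {K : Type u} [Field K] {p : ℕ} [hp : Fact p.Prime] [CharP K p]
    {Γ₀ : Type u} [LinearOrderedCommGroupWithZero Γ₀]
    {q : ℕ}
    (hqp : ∃ e : ℕ, 1 ≤ e ∧ q = p ^ e)
    -- `L = F_{q^m} · K`, a Galois extension of `K` of degree `m`
    {L : Type u} [Field L] [Algebra K L] [FiniteDimensional K L]
    {m : ℕ} (hm : 1 ≤ m)
    (hgen : IntermediateField.adjoin K {x : L | x ^ q ^ m = x} = ⊤)
    -- `w` is the unique extension of `v` to `L`: it is Galois-invariant and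
    -- has the same value group `G = v(K*)`
    (w : Valuation L Γ₀)
    (hinv : ∀ (σ : L ≃ₐ[K] L) (x : L), w (σ x) = w x)
    -- the closed disk `D̄ = D̄(x₀, g)` with `g ∈ G`
    (x₀ : L) (g : Γ₀) :
    ∃ x₁ : L, w (x₁ - x₀) ≤ g ∧
      ∀ σ : L ≃ₐ[K] L,
        σ '' {x : L | w (x - x₀) ≤ g} = {x : L | w (x - x₀) ≤ g} →
        ∀ x : L, w (x - x₁) < g → w (σ x - x₁) < g := by
  classical
  obtain ⟨e, he, rfl⟩ := hqp
  have : CharP L p := charP_of_injective_algebraMap (algebraMap K L).injective p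
  set F := frobeniusFixedField L p (e * m)
  have hN : 2 ≤ p ^ (e * m) := Nat.one_lt_pow (Nat.mul_pos he hm).ne' hp.out.one_lt
  have hspan : Submodule.span K (F : Set L) = ⊤ := by
    refine F.toSubmonoid.span_eq_top_of_adjoin_eq_top (Eq.trans ?_ hgen)
    congr 1
    ext x
    simp [F, mem_frobeniusFixedField, pow_mul]
  set D := {x : L | w (x - x₀) ≤ g}
  let I := MulAction.stabilizer (L ≃ₐ[K] L) D
  have hI : ∀ σ : L ≃ₐ[K] L, σ '' D = D → σ ∈ I := fun σ hσ ↦ by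
    rwa [MulAction.mem_stabilizer_iff, ← Set.image_smul]
  have hx₀ : ∀ σ ∈ I, w (σ x₀ - x₀) ≤ g := fun σ hσ ↦ by
    change σ x₀ ∈ D
    rw [← MulAction.mem_stabilizer_iff.mp hσ, ← Set.image_smul]
    exact ⟨x₀, by simp [D], rfl⟩
  have := Fintype.ofFinite I
  obtain ⟨ζ, hζF, hζ⟩ := I.exists_mem_autTrace_ne_zero hspan
  have hζw : w ζ ≤ w (I.autTrace ζ) := by
    rw [w.map_eq_one_of_pow_eq_self (w.ne_zero_iff.mpr hζ) hN
      (I.autTrace_mem_frobeniusFixedField hζF)]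
    rcases eq_or_ne ζ 0 with rfl | hζ0
    · simp
    · exact (w.map_eq_one_of_pow_eq_self (w.ne_zero_iff.mpr hζ0) hN hζF).le
  obtain ⟨x₁, hx₁, hfix⟩ := I.exists_fixed_valuation_sub_le w (fun σ _ ↦ hinv σ) hζ hζw hx₀
  refine ⟨x₁, hx₁, fun σ hσ x hx ↦ ?_⟩
  rwa [← hfix σ (hI σ hσ), ← map_sub, hinv]

theorem exists_galois_stable_open_disk
    {K : Type u} [Field K] {p : ℕ} [hp : Fact p.Prime] [CharP K p]
    {Γ₀ : Type u} [LinearOrderedCommGroupWithZero Γ₀] (v : Valuation K Γ₀)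
    (hmax : IsMaximallyComplete v)
    (hdiv : ∀ x : K, x ≠ 0 → ∀ m : ℕ, 1 ≤ m → ∃ y : K, y ≠ 0 ∧ (v y) ^ m = v x)
    {q : ℕ} (hq : Nat.card (IsLocalRing.ResidueField v.valuationSubring) = q)
    (hqp : ∃ e : ℕ, 1 ≤ e ∧ q = p ^ e)
    -- `L = F_{q^m} · K`, a Galois extension of `K` of degree `m`
    {L : Type u} [Field L] [Algebra K L] [IsGalois K L] [FiniteDimensional K L]
    {m : ℕ} (hm : 1 ≤ m) (hdeg : Module.finrank K L = m)
    (hgen : IntermediateField.adjoin K {x : L | x ^ q ^ m = x} = ⊤)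
    -- `w` is the unique extension of `v` to `L`: it is Galois-invariant and
    -- has the same value group `G = v(K*)`
    (w : Valuation L Γ₀)
    (hext : ∀ x : K, w (algebraMap K L x) = v x)
    (hinv : ∀ (σ : L ≃ₐ[K] L) (x : L), w (σ x) = w x)
    (hgrp : ∀ y : L, y ≠ 0 → ∃ x : K, x ≠ 0 ∧ w y = v x)
    -- the closed disk `D̄ = D̄(x₀, g)` with `g ∈ G`
    (x₀ : L) (g : Γ₀) (hg : g ≠ 0) (hgG : ∃ b : K, b ≠ 0 ∧ v b = g) :
    ∃ x₁ : L, w (x₁ - x₀) ≤ g ∧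
      ∀ σ : L ≃ₐ[K] L,
        σ '' {x : L | w (x - x₀) ≤ g} = {x : L | w (x - x₀) ≤ g} →
        ∀ x : L, w (x - x₁) < g → w (σ x - x₁) < g :=
  exists_galois_stable_open_disk_general (hp := hp) hqp hm hgen w hinv x₀ g
end
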